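/- arXiv:0803.1250 — 8 statements merged into one kernel-verified Lean document; each statement's English description precedes it below -/
import Mathlib

section
/- Let S¹ = ℝ/ℤ be the circle with its quotient metric. For every α ∈ S¹, every p ∈ S¹, and every n ∈ ℕ, if the set X = {p + i·α : i = 0, ..., n} has at least two elements, then |NND(X)| ≤ 3. -/
/-!
The nearest neighbour distance of `p + i • α` in the orbit segment is the closest return distance
`min {‖k • α‖ : k ≤ max i (n - i), k • α ≠ 0}`, and `max i (n - i) ≥ m := ⌈n / 2⌉`. Going from time
`m` to time `max i (n - i) ≤ n`, this minimum either keeps its value at time `m` or drops to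
`‖r • α‖` for a closest return time `r ∈ (m, n]`. There are at most two such `r`: minimal real
lifts of two closest return times `a < c < 2a` have opposite signs, and three reals cannot have
pairwise opposite signs.
-/

/-- The nearest neighbor distance of `x` in `X`: the infimum (minimum, when `X` is
finite with at least two elements) of distances from `x` to other points of `X`. -/
noncomputable def nnd {M : Type*} [MetricSpace M] (x : M) (X : Set M) : ℝ :=
  sInf (dist x '' (X \ {x}))

/-- The set of nearest neighbor distances of a set `X`. -/
noncomputable def NND {M : Type*} [MetricSpace M] (X : Set M) : Set ℝ :=
  (fun x => nnd x X) '' X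

open Set

section ClosestReturn

variable {G : Type*} [SeminormedAddGroup G]

noncomputable def closestReturn (α : G) (t : ℕ) : ℝ :=
  sInf ((fun k : ℕ => ‖k • α‖) '' {k | k ≤ t ∧ k • α ≠ 0})

def IsClosestReturnTime (α : G) (r : ℕ) : Prop :=
  r • α ≠ 0 ∧ ∀ k < r, k • α ≠ 0 → ‖r • α‖ < ‖k • α‖

theorem closestReturn_eq_norm_of_forall_le {α : G} {t r : ℕ} (hr : r ≤ t ∧ r • α ≠ 0)
    (hmin : ∀ k ≤ t, k • α ≠ 0 → ‖r • α‖ ≤ ‖k • α‖) :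
    closestReturn α t = ‖r • α‖ :=
  IsLeast.csInf_eq ⟨mem_image_of_mem _ hr, forall_mem_image.2 fun k hk => hmin k hk.1 hk.2⟩

theorem closestReturn_eq_or_exists_isClosestReturnTime (α : G) {m t : ℕ} (hmt : m ≤ t) :
    closestReturn α t = closestReturn α m ∨
      ∃ r, m < r ∧ r ≤ t ∧ IsClosestReturnTime α r ∧ ‖r • α‖ = closestReturn α t := by
  classical
  set S := {k | k ≤ t ∧ k • α ≠ 0}
  rcases S.eq_empty_or_nonempty with hS | hS
  · have hSm : {k | k ≤ m ∧ k • α ≠ 0} = ∅ := eq_empty_of_subset_empty fun k hk =>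
      hS.subset ⟨hk.1.trans hmt, hk.2⟩
    left
    rw [closestReturn, closestReturn, hSm, show {k | k ≤ t ∧ k • α ≠ 0} = ∅ from hS]
  have hex : ∃ r, r ∈ S ∧ ∀ k ∈ S, ‖r • α‖ ≤ ‖k • α‖ :=
    S.exists_min_image _ ((finite_Iic t).subset fun k hk => hk.1) hS
  -- the first minimiser is a closest return time
  set r := Nat.find hex
  obtain ⟨hrS, hrmin⟩ : r ∈ S ∧ ∀ k ∈ S, ‖r • α‖ ≤ ‖k • α‖ := Nat.find_spec hex
  have hrt : closestReturn α t = ‖r • α‖ :=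
    closestReturn_eq_norm_of_forall_le hrS fun k hk hk0 => hrmin k ⟨hk, hk0⟩
  rcases le_or_gt r m with hrm | hmr
  · left
    rw [hrt, closestReturn_eq_norm_of_forall_le ⟨hrm, hrS.2⟩ fun k hk hk0 =>
      hrmin k ⟨hk.trans hmt, hk0⟩]
  · refine Or.inr ⟨r, hmr, hrS.1, ⟨hrS.2, fun k hkr hk0 => ?_⟩, hrt.symm⟩
    have hkS : k ∈ S := ⟨hkr.le.trans hrS.1, hk0⟩
    obtain ⟨j, hjS, hjk⟩ : ∃ j ∈ S, ‖j • α‖ < ‖k • α‖ := by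
      simpa [hkS] using Nat.find_min hex hkr
    exact (hrmin j hjS).trans_lt hjk

end ClosestReturn

section Orbit

variable {G : Type*} [NormedAddCommGroup G]

theorem dist_add_nsmul_add_nsmul (p α : G) (i k : ℕ) :
    dist (p + i • α) (p + (i + k) • α) = ‖k • α‖ := by
  rw [add_nsmul, ← add_assoc, dist_self_add_right]

theorem nnd_orbit (p α : G) {n i : ℕ} (hi : i ≤ n) :
    nnd (p + i • α) {x | ∃ j : ℕ, j ≤ n ∧ x = p + j • α} = closestReturn α (max i (n - i)) := by
  rw [nnd, closestReturn]
  congr 1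
  ext d
  constructor
  · rintro ⟨_, ⟨⟨j, hj, rfl⟩, hji⟩, rfl⟩
    obtain ⟨k, hk, hdk⟩ : ∃ k ≤ max i (n - i), dist (p + i • α) (p + j • α) = ‖k • α‖ := by
      rcases le_total i j with hij | hji
      · obtain ⟨k, rfl⟩ := Nat.exists_eq_add_of_le hij
        exact ⟨k, by omega, dist_add_nsmul_add_nsmul p α i k⟩
      · obtain ⟨k, rfl⟩ := Nat.exists_eq_add_of_le hji
        exact ⟨k, by omega, by rw [dist_comm, dist_add_nsmul_add_nsmul]⟩
    have hd : dist (p + i • α) (p + j • α) ≠ 0 := dist_ne_zero.2 (Ne.symm hji)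
    exact ⟨k, ⟨hk, norm_ne_zero_iff.1 (hdk ▸ hd)⟩, hdk.symm⟩
  · rintro ⟨k, ⟨hk, hk0⟩, rfl⟩
    obtain ⟨j, hj, hdj⟩ : ∃ j ≤ n, dist (p + i • α) (p + j • α) = ‖k • α‖ := by
      rcases le_or_gt k (n - i) with hkn | hki
      · exact ⟨i + k, by omega, dist_add_nsmul_add_nsmul p α i k⟩
      · obtain ⟨j, rfl⟩ := Nat.exists_eq_add_of_le' (show k ≤ i by omega)
        exact ⟨j, by omega, by rw [dist_comm, dist_add_nsmul_add_nsmul]⟩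
    refine ⟨_, ⟨⟨j, hj, rfl⟩, fun hji => ?_⟩, hdj⟩
    rw [mem_singleton_iff.1 hji, dist_self, eq_comm, norm_eq_zero] at hdj
    exact hk0 hdj

end Orbit

section Circle

variable {T : ℝ}

theorem AddCircle.exists_coe_eq_abs_eq_norm (x : AddCircle T) :
    ∃ u : ℝ, (u : AddCircle T) = x ∧ |u| = ‖x‖ := by
  induction x using QuotientAddGroup.induction_on with
  | H x =>
    refine ⟨x - round (T⁻¹ * x) * T, ?_, (AddCircle.norm_eq T).symm⟩
    rw [AddCircle.coe_sub, sub_eq_self, AddCircle.coe_eq_zero_iff]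
    exact ⟨_, zsmul_eq_mul _ _⟩

theorem abs_sub_lt_of_mul_pos {u v : ℝ} (huv : 0 < u * v) (h : |v| < |u|) : |v - u| < |u| := by
  rcases mul_pos_iff.1 huv with ⟨hu, hv⟩ | ⟨hu, hv⟩
  · rw [abs_of_pos hu, abs_of_pos hv] at h
    rw [abs_of_pos hu, abs_sub_lt_iff]
    constructor <;> linarith
  · rw [abs_of_neg hu, abs_of_neg hv] at h
    rw [abs_of_neg hu, abs_sub_lt_iff]
    constructor <;> linarith

/-- If `u` and `v` had the same sign, `(c - a) • α`, a return before time `a`, would be closer to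
`0` than `a • α`. -/
theorem IsClosestReturnTime.mul_neg_of_lt_two_mul {α : AddCircle T} {a c : ℕ}
    (ha : IsClosestReturnTime α a) (hc : IsClosestReturnTime α c) (hac : a < c) (hca : c < 2 * a)
    {u v : ℝ} (hu : (u : AddCircle T) = a • α) (hu' : |u| = ‖a • α‖)
    (hv : (v : AddCircle T) = c • α) (hv' : |v| = ‖c • α‖) : u * v < 0 := by
  have hu0 : u ≠ 0 := by rintro rfl; exact ha.1 (by rw [← hu, AddCircle.coe_zero])
  have hv0 : v ≠ 0 := by rintro rfl; exact hc.1 (by rw [← hv, AddCircle.coe_zero])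
  by_contra! huv
  have hca' : ‖c • α‖ < ‖a • α‖ := hc.2 a hac ha.1
  have hdiff : (c - a) • α = c • α - a • α := by rw [sub_nsmul α hac.le, sub_eq_add_neg]
  have hlt : ‖(c - a) • α‖ < ‖a • α‖ :=
    calc ‖(c - a) • α‖ = ‖((v - u : ℝ) : AddCircle T)‖ := by
          rw [hdiff, AddCircle.coe_sub, hu, hv]
      _ ≤ |v - u| := QuotientAddGroup.norm_mk_le_norm
      _ < |u| := abs_sub_lt_of_mul_pos (huv.lt_of_ne' (mul_ne_zero hu0 hv0)) (by rwa [hu', hv'])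
      _ = ‖a • α‖ := hu'
  by_cases h0 : (c - a) • α = 0
  · rw [hdiff, sub_eq_zero] at h0
    exact hca'.ne (by rw [h0])
  · exact hlt.not_gt (ha.2 (c - a) (by omega) h0)

theorem encard_closestReturnTimes_le_two (α : AddCircle T) {m n : ℕ} (hn : n ≤ 2 * m) :
    {r | m < r ∧ r ≤ n ∧ IsClosestReturnTime α r}.encard ≤ 2 := by
  set S := {r | m < r ∧ r ≤ n ∧ IsClosestReturnTime α r}
  choose d hd hd' using fun k : ℕ => AddCircle.exists_coe_eq_abs_eq_norm (k • α)
  have hneg : ∀ a ∈ S, ∀ c ∈ S, a ≠ c → d a * d c < 0 := by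
    rintro a ⟨hma, han, ha⟩ c ⟨hmc, hcn, hc⟩ hac
    rcases hac.lt_or_gt with h | h
    · exact ha.mul_neg_of_lt_two_mul hc h (by omega) (hd a) (hd' a) (hd c) (hd' c)
    · rw [mul_comm]
      exact hc.mul_neg_of_lt_two_mul ha h (by omega) (hd c) (hd' c) (hd a) (hd' a)
  have hS : S.Finite := (finite_Iic n).subset fun r hr => hr.2.1
  rw [show (2 : ℕ∞) = (2 : ℕ) from rfl, encard_le_coe_iff_finite_ncard_le]
  refine ⟨hS, not_lt.1 fun h3 => ?_⟩
  obtain ⟨a, b, c, ha, hb, hc, hab, hac, hbc⟩ := (two_lt_ncard_iff hS).1 h3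
  nlinarith [mul_pos_of_neg_of_neg (hneg a ha b hb hab) (hneg b hb c hc hbc), hneg a ha c hc hac,
    sq_nonneg (d a * d b * d c)]

end Circle

theorem NND_orbit_subset {G : Type*} [NormedAddCommGroup G] (p α : G) (n : ℕ) :
    NND {x | ∃ i : ℕ, i ≤ n ∧ x = p + i • α} ⊆
      insert (closestReturn α ((n + 1) / 2))
        ((fun r : ℕ => ‖r • α‖) '' {r | (n + 1) / 2 < r ∧ r ≤ n ∧ IsClosestReturnTime α r}) := by
  rintro _ ⟨_, ⟨i, hi, rfl⟩, rfl⟩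
  dsimp only
  rw [nnd_orbit p α hi]
  have hm : (n + 1) / 2 ≤ max i (n - i) := by omega
  rcases closestReturn_eq_or_exists_isClosestReturnTime α hm with h | ⟨r, hmr, hr, hrec, hr'⟩
  · exact Or.inl h
  · exact mem_insert_of_mem _ ⟨r, ⟨hmr, hr.trans (max_le hi (n.sub_le i)), hrec⟩, hr'⟩

theorem three_gap_circle_general (α p : AddCircle (1 : ℝ)) (n : ℕ)
    (X : Set (AddCircle (1 : ℝ))) (hX : X = {x | ∃ i : ℕ, i ≤ n ∧ x = p + (i : ℕ) • α}) :
    (NND X).encard ≤ 3 := by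
  subst hX
  refine (encard_le_encard (NND_orbit_subset p α n)).trans ?_
  calc _ ≤ _ + 1 := encard_insert_le _ _
    _ ≤ {r | (n + 1) / 2 < r ∧ r ≤ n ∧ IsClosestReturnTime α r}.encard + 1 := by
      gcongr; exact encard_image_le _ _
    _ ≤ 2 + 1 := by gcongr; exact encard_closestReturnTimes_le_two α (by omega)
    _ = 3 := rfl

/-- Geometric Three Gap Theorem for the circle `ℝ/ℤ`: for any rotation (by `α`),
point `p`, and `n`, the orbit segment `{p + i • α : i = 0, …, n}` has at most three
distinct nearest neighbor distances. -/
theorem three_gap_circle (α p : AddCircle (1 : ℝ)) (n : ℕ)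
    (X : Set (AddCircle (1 : ℝ))) (hX : X = {x | ∃ i : ℕ, i ≤ n ∧ x = p + (i : ℕ) • α})
    (h2 : X.Nontrivial) :
    (NND X).encard ≤ 3 :=
  three_gap_circle_general α p n X hX
end

section
/- Let n ≥ 1 be a natural number and p ∈ ℝ. Let y₁ < y₂ < ... < y_m be the distinct elements of the set {frac(i·p) : i = 1, ..., n} ⊂ [0,1), where frac denotes the fractional part. Then the set of consecutive differences {y_{j+1} − y_j : 1 ≤ j ≤ m−1} has at most 3 elements. -/
/-!
Let `δ₁ = {s p}` be the smallest positive point and `1 - δ₂ = {t p}` the largest one among the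
`{k p}`, `1 ≤ k ≤ n`. For consecutive points `{i p} < {j p}`, the point `{(j - i) p}` shows that the
gap is at least `δ₁` if `i < j`, and at least `δ₂` if `j < i`. Shifting an endpoint by `s`, `t` or
`s - t` (whose point is `δ₁ + δ₂`) lands strictly inside the gap whenever the shifted index stays in
`[1, n]`. Hence the gap is at most `δ₁ + δ₂`, and once it exceeds `δ₁` (resp. `δ₂`) we get `j ≤ s`
(resp. `i ≤ t`), so that `{(s - j + i) p}` (resp. `{(t - i + j) p}`) shows it is at least `δ₁ + δ₂`.
-/

open Set Int

namespace ThreeGap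

section FractArith

variable {K : Type*} [Field K] [LinearOrder K] [IsStrictOrderedRing K] [FloorRing K]

theorem fract_sub_of_le {u v : K} (h : fract v ≤ fract u) :
    fract (u - v) = fract u - fract v := by
  rw [fract_eq_iff]
  refine ⟨by linarith, by linarith [fract_lt_one u, fract_nonneg v], ⌊u⌋ - ⌊v⌋, ?_⟩
  simp only [fract]
  push_cast
  ring

theorem fract_sub_of_lt {u v : K} (h : fract u < fract v) :
    fract (u - v) = fract u - fract v + 1 := by
  rw [fract_eq_iff]
  refine ⟨by linarith [fract_lt_one v, fract_nonneg u], by linarith, ⌊u⌋ - ⌊v⌋ - 1, ?_⟩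
  simp only [fract]
  push_cast
  ring

theorem fract_add_of_lt_one {u v : K} (h : fract u + fract v < 1) :
    fract (u + v) = fract u + fract v := by
  rw [fract_eq_iff]
  refine ⟨by linarith [fract_nonneg u, fract_nonneg v], h, ⌊u⌋ + ⌊v⌋, ?_⟩
  simp only [fract]
  push_cast
  ring

end FractArith

section Gaps

variable {K : Type*} [Field K] [LinearOrder K] [FloorRing K] {n : ℕ} {p : K} {i j s t : ℤ}

structure IsMinPosIndex (n : ℕ) (p : K) (s : ℤ) : Prop where
  mem : s ∈ Icc 1 (n : ℤ)
  pos : 0 < fract (s * p)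
  le : ∀ k ∈ Icc 1 (n : ℤ), 0 < fract (k * p) → fract (s * p) ≤ fract (k * p)

structure IsMaxIndex (n : ℕ) (p : K) (t : ℤ) : Prop where
  mem : t ∈ Icc 1 (n : ℤ)
  le : ∀ k ∈ Icc 1 (n : ℤ), fract (k * p) ≤ fract (t * p)

structure IsGap (n : ℕ) (p : K) (i j : ℤ) : Prop where
  mem_left : i ∈ Icc 1 (n : ℤ)
  mem_right : j ∈ Icc 1 (n : ℤ)
  lt : fract (i * p) < fract (j * p)
  notMem_Ioo : ∀ k ∈ Icc 1 (n : ℤ), fract (k * p) ∉ Ioo (fract (i * p)) (fract (j * p))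

theorem setOf_exists_nat_fract_eq_image (n : ℕ) (p : K) :
    {y | ∃ i : ℕ, 1 ≤ i ∧ i ≤ n ∧ y = fract (i * p)} =
      (fun k : ℤ => fract (k * p)) '' Icc 1 (n : ℤ) := by
  ext y
  constructor
  · rintro ⟨i, hi₁, hin, rfl⟩
    exact ⟨i, ⟨by omega, by omega⟩, by simp⟩
  · rintro ⟨k, ⟨hk₁, hkn⟩, rfl⟩
    lift k to ℕ using by omega
    exact ⟨k, by omega, by omega, by simp⟩

theorem IsGap.exists_isMaxIndex (hg : IsGap n p i j) : ∃ t, IsMaxIndex n p t := by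
  obtain ⟨t, ht, hmax⟩ := exists_max_image (Icc 1 (n : ℤ)) (fun k : ℤ => fract (k * p))
    (finite_Icc _ _) ⟨i, hg.mem_left⟩
  exact ⟨t, ht, hmax⟩

variable [IsStrictOrderedRing K]

namespace IsGap

theorem le_of_lt_sub (hg : IsGap n p i j) (hs : IsMinPosIndex n p s)
    (h : fract (s * p) < fract (j * p) - fract (i * p)) : j ≤ s := by
  obtain ⟨hs₁, -⟩ := hs.mem
  obtain ⟨-, hjn⟩ := hg.mem_right
  by_contra! hsj
  have hval : fract (((j - s : ℤ) : K) * p) = fract (j * p) - fract (s * p) := by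
    rw [Int.cast_sub, sub_mul, fract_sub_of_le (by linarith [fract_nonneg ((i : K) * p)])]
  refine hg.notMem_Ioo (j - s) ⟨by omega, by omega⟩ ?_
  rw [hval]
  constructor <;> linarith [hs.pos]

theorem le_of_one_sub_lt_sub (hg : IsGap n p i j) (ht : IsMaxIndex n p t)
    (h : 1 - fract (t * p) < fract (j * p) - fract (i * p)) : i ≤ t := by
  obtain ⟨ht₁, -⟩ := ht.mem
  obtain ⟨-, hin⟩ := hg.mem_left
  by_contra! hti
  have hval : fract (((i - t : ℤ) : K) * p) = fract (i * p) + (1 - fract (t * p)) := by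
    rw [Int.cast_sub, sub_mul, fract_sub_of_lt (by linarith [fract_lt_one ((j : K) * p)])]
    ring
  refine hg.notMem_Ioo (i - t) ⟨by omega, by omega⟩ ?_
  rw [hval]
  constructor <;> linarith [fract_lt_one ((t : K) * p)]

theorem sub_le_add (hg : IsGap n p i j) (hs : IsMinPosIndex n p s) (ht : IsMaxIndex n p t) :
    fract (j * p) - fract (i * p) ≤ fract (s * p) + (1 - fract (t * p)) := by
  by_contra! h
  have hδ₂ := fract_lt_one ((t : K) * p)
  have hjs := hg.le_of_lt_sub hs (by linarith)
  have hit := hg.le_of_one_sub_lt_sub ht (by linarith [hs.pos])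
  obtain ⟨hi₁, -⟩ := hg.mem_left
  obtain ⟨hj₁, -⟩ := hg.mem_right
  obtain ⟨-, hsn⟩ := hs.mem
  obtain ⟨-, htn⟩ := ht.mem
  have hy := fract_nonneg ((i : K) * p)
  have hz := fract_lt_one ((j : K) * p)
  have hst : fract (((s - t : ℤ) : K) * p) = fract (s * p) + (1 - fract (t * p)) := by
    rw [Int.cast_sub, sub_mul, fract_sub_of_lt (by linarith)]
    ring
  rcases le_or_gt 1 (i + (s - t)) with hk | hk
  · refine hg.notMem_Ioo (i + (s - t)) ⟨hk, by omega⟩ ?_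
    rw [Int.cast_add, add_mul, fract_add_of_lt_one (by linarith), hst]
    constructor <;> linarith [hs.pos]
  · refine hg.notMem_Ioo (j - (s - t)) ⟨by omega, by omega⟩ ?_
    rw [Int.cast_sub, sub_mul, fract_sub_of_le (by linarith), hst]
    constructor <;> linarith [hs.pos]

theorem sub_eq_of_lt (hg : IsGap n p i j) (hs : IsMinPosIndex n p s) (ht : IsMaxIndex n p t)
    (hij : i < j) :
    fract (j * p) - fract (i * p) = fract (s * p) ∨
      fract (j * p) - fract (i * p) = fract (s * p) + (1 - fract (t * p)) := by
  obtain ⟨hi₁, -⟩ := hg.mem_left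
  obtain ⟨-, hjn⟩ := hg.mem_right
  obtain ⟨-, hsn⟩ := hs.mem
  have hji : fract (((j - i : ℤ) : K) * p) = fract (j * p) - fract (i * p) := by
    rw [Int.cast_sub, sub_mul, fract_sub_of_le hg.lt.le]
  have hδ₁ := hs.le (j - i) ⟨by omega, by omega⟩ (by rw [hji]; linarith [hg.lt])
  rw [hji] at hδ₁
  rcases hδ₁.eq_or_lt with h | h
  · exact .inl h.symm
  have hjs := hg.le_of_lt_sub hs h
  have hval : fract (((s - (j - i) : ℤ) : K) * p) =
      fract (s * p) - (fract (j * p) - fract (i * p)) + 1 := by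
    rw [Int.cast_sub s, sub_mul, fract_sub_of_lt (by rwa [hji]), hji]
  have hδ₂ := ht.le (s - (j - i)) ⟨by omega, by omega⟩
  rw [hval] at hδ₂
  exact .inr (le_antisymm (hg.sub_le_add hs ht) (by linarith))

theorem sub_eq_of_gt (hg : IsGap n p i j) (hs : IsMinPosIndex n p s) (ht : IsMaxIndex n p t)
    (hji : j < i) :
    fract (j * p) - fract (i * p) = 1 - fract (t * p) ∨
      fract (j * p) - fract (i * p) = fract (s * p) + (1 - fract (t * p)) := by
  obtain ⟨hj₁, -⟩ := hg.mem_right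
  obtain ⟨-, hin⟩ := hg.mem_left
  obtain ⟨-, htn⟩ := ht.mem
  have hij : fract (((i - j : ℤ) : K) * p) = fract (i * p) - fract (j * p) + 1 := by
    rw [Int.cast_sub, sub_mul, fract_sub_of_lt hg.lt]
  have hδ₂ := ht.le (i - j) ⟨by omega, by omega⟩
  rw [hij] at hδ₂
  rcases (show 1 - fract (t * p) ≤ fract (j * p) - fract (i * p) by linarith).eq_or_lt
    with h | h
  · exact .inl h.symm
  have hit := hg.le_of_one_sub_lt_sub ht h
  have hval : fract (((t - (i - j) : ℤ) : K) * p) =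
      fract (j * p) - fract (i * p) - (1 - fract (t * p)) := by
    rw [Int.cast_sub t, sub_mul, fract_sub_of_le (by rw [hij]; linarith), hij]
    ring
  have hδ₁ := hs.le (t - (i - j)) ⟨by omega, by omega⟩ (by rw [hval]; linarith)
  rw [hval] at hδ₁
  exact .inr (le_antisymm (hg.sub_le_add hs ht) (by linarith))

theorem sub_mem (hg : IsGap n p i j) (hs : IsMinPosIndex n p s) (ht : IsMaxIndex n p t) :
    fract (j * p) - fract (i * p) ∈
      ({fract (s * p), 1 - fract (t * p), fract (s * p) + (1 - fract (t * p))} : Set K) := by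
  rcases lt_trichotomy i j with hij | rfl | hji
  · rcases hg.sub_eq_of_lt hs ht hij with h | h <;> simp [h]
  · exact absurd hg.lt (lt_irrefl _)
  · rcases hg.sub_eq_of_gt hs ht hji with h | h <;> simp [h]

theorem exists_isMinPosIndex (hg : IsGap n p i j) : ∃ s, IsMinPosIndex n p s := by
  obtain ⟨s, ⟨hs, hpos⟩, hmin⟩ := exists_min_image {k ∈ Icc 1 (n : ℤ) | 0 < fract (k * p)}
    (fun k : ℤ => fract (k * p)) ((finite_Icc _ _).sep _)
    ⟨j, hg.mem_right, by linarith [hg.lt, fract_nonneg ((i : K) * p)]⟩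
  exact ⟨s, hs, hpos, fun k hk hkpos => hmin k ⟨hk, hkpos⟩⟩

end IsGap

theorem encard_gaps_le_three (n : ℕ) (p : K) :
    {d | ∃ i j, IsGap n p i j ∧ fract (j * p) - fract (i * p) = d}.encard ≤ 3 := by
  rcases eq_empty_or_nonempty {d | ∃ i j, IsGap n p i j ∧ fract (j * p) - fract (i * p) = d}
    with h | ⟨_, i, j, hg, -⟩
  · simp [h]
  obtain ⟨s, hs⟩ := hg.exists_isMinPosIndex
  obtain ⟨t, ht⟩ := hg.exists_isMaxIndex
  calc _ ≤ ({fract (s * p), 1 - fract (t * p), fract (s * p) + (1 - fract (t * p))} :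
          Set K).encard := encard_mono (by rintro _ ⟨i, j, hg, rfl⟩; exact hg.sub_mem hs ht)
    _ ≤ 3 := by
        rw [← Finset.coe_pair, ← Finset.coe_insert, encard_coe_eq_coe_finsetCard]
        exact_mod_cast Finset.card_le_three

end Gaps

end ThreeGap

theorem three_gap_theorem_general (n : ℕ) (p : ℝ)
    (Y : Set ℝ) (hY : Y = {y | ∃ i : ℕ, 1 ≤ i ∧ i ≤ n ∧ y = Int.fract (i * p)})
    (D : Set ℝ)
    (hD : D = {d | ∃ y ∈ Y, ∃ z ∈ Y, y < z ∧ (∀ w ∈ Y, ¬(y < w ∧ w < z)) ∧ d = z - y}) :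
    D.encard ≤ 3 := by
  rw [ThreeGap.setOf_exists_nat_fract_eq_image] at hY
  refine (encard_mono ?_).trans (ThreeGap.encard_gaps_le_three n p)
  rw [hD, hY]
  rintro _ ⟨_, ⟨i, hi, rfl⟩, _, ⟨j, hj, rfl⟩, hij, hgap, rfl⟩
  exact ⟨i, j, ⟨hi, hj, hij, fun k hk hmem => hgap _ ⟨k, hk, rfl⟩ hmem⟩, rfl⟩

/-- The classical Three Gap Theorem: for `n ≥ 1` and `p ∈ ℝ`, the set of gaps between
consecutive elements of `{frac(i·p) : i = 1, …, n} ⊆ [0,1)` has at most three elements.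
A gap is a difference `z - y` where `y < z` are both in the set and no element of the
set lies strictly between them. -/
theorem three_gap_theorem (n : ℕ) (hn : 1 ≤ n) (p : ℝ)
    (Y : Set ℝ) (hY : Y = {y | ∃ i : ℕ, 1 ≤ i ∧ i ≤ n ∧ y = Int.fract (i * p)})
    (D : Set ℝ)
    (hD : D = {d | ∃ y ∈ Y, ∃ z ∈ Y, y < z ∧ (∀ w ∈ Y, ¬(y < w ∧ w < z)) ∧ d = z - y}) :
    D.encard ≤ 3 :=
  three_gap_theorem_general n p Y hY D hD
end

section
/- Let M be a metric space and N ∈ ℕ, and suppose that for every r > 0 and every q ∈ M, every subset of the open ball B(q, r) whose points are pairwise at distance at least r has at most N elements. Then for every isometry I : M → M (a distance-preserving map), every p ∈ M, and every n ∈ ℕ, if the set X = {I^i(p) : i = 0, ..., n} has at least two elements, then |NND(X)| ≤ N + 1. -/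
open Set

theorem nnd_le_dist {M : Type*} [MetricSpace M] {X : Set M} {x y : M} (hy : y ∈ X)
    (hyx : y ≠ x) : nnd x X ≤ dist x y :=
  csInf_le ⟨0, by rintro _ ⟨z, -, rfl⟩; exact dist_nonneg⟩ ⟨y, ⟨hy, hyx⟩, rfl⟩

theorem exists_dist_eq_nnd {M : Type*} [MetricSpace M] {X : Set M} {x : M} (hfin : X.Finite)
    (hnt : X.Nontrivial) : ∃ y ∈ X, y ≠ x ∧ dist x y = nnd x X := by
  obtain ⟨y, hy, hyx⟩ := hnt.exists_ne x
  obtain ⟨z, ⟨hz, hzx⟩, hdist⟩ :=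
    (show (X \ {x}).Nonempty from ⟨y, hy, hyx⟩).image (dist x) |>.csInf_mem (hfin.sdiff.image _)
  exact ⟨z, hz, hzx, hdist⟩

theorem Isometry.iterate {M : Type*} [MetricSpace M] {I : M → M} (hI : Isometry I) :
    ∀ k : ℕ, Isometry I^[k]
  | 0 => isometry_id
  | k + 1 => (hI.iterate k).comp hI

theorem Isometry.dist_iterate_add {M : Type*} [MetricSpace M] {I : M → M} (hI : Isometry I)
    (p : M) (i k : ℕ) : dist (I^[i] p) (I^[i + k] p) = dist p (I^[k] p) := by
  rw [Function.iterate_add_apply, (hI.iterate i).dist_eq]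

section OrbitSegment

variable {M : Type*} {I : M → M} {p : M} {n : ℕ}

def orbitSegment (I : M → M) (p : M) (n : ℕ) : Set M :=
  {x | ∃ i : ℕ, i ≤ n ∧ x = I^[i] p}

theorem iterate_mem_orbitSegment {i : ℕ} (hi : i ≤ n) : I^[i] p ∈ orbitSegment I p n :=
  ⟨i, hi, rfl⟩

theorem orbitSegment_finite : (orbitSegment I p n).Finite :=
  ((Set.finite_Iic n).image fun i => I^[i] p).subset <| by
    rintro _ ⟨i, hi, rfl⟩
    exact ⟨i, hi, rfl⟩

theorem nnd_iterate_le [MetricSpace M] (hI : Isometry I) {i k : ℕ} (hi : i ≤ n)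
    (hk : k ≤ max i (n - i)) (hkp : I^[k] p ≠ p) :
    nnd (I^[i] p) (orbitSegment I p n) ≤ dist p (I^[k] p) := by
  have hpos : 0 < dist p (I^[k] p) := dist_pos.2 hkp.symm
  rcases le_max_iff.1 hk with hki | hkn
  · obtain ⟨j, rfl⟩ := Nat.exists_eq_add_of_le' hki
    rw [← hI.dist_iterate_add p j k, dist_comm] at hpos ⊢
    exact nnd_le_dist (iterate_mem_orbitSegment (by omega)) (dist_pos.1 hpos).symm
  · rw [← hI.dist_iterate_add p i k] at hpos ⊢
    exact nnd_le_dist (iterate_mem_orbitSegment (by omega)) (dist_pos.1 hpos).symm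

theorem exists_nnd_iterate_eq [MetricSpace M] (hI : Isometry I)
    (hnt : (orbitSegment I p n).Nontrivial) {i : ℕ} (hi : i ≤ n) :
    ∃ k ≤ max i (n - i), I^[k] p ≠ p ∧
      nnd (I^[i] p) (orbitSegment I p n) = dist p (I^[k] p) := by
  obtain ⟨_, ⟨j, hj, rfl⟩, hne, hdist⟩ :=
    exists_dist_eq_nnd (x := I^[i] p) orbitSegment_finite hnt
  rw [← hdist]
  rcases le_total i j with hij | hji
  · obtain ⟨k, rfl⟩ := Nat.exists_eq_add_of_le hij
    refine ⟨k, by omega, fun hk => hne ?_, hI.dist_iterate_add p i k⟩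
    rw [Function.iterate_add_apply, hk]
  · obtain ⟨k, rfl⟩ := Nat.exists_eq_add_of_le hji
    refine ⟨k, by omega, fun hk => hne ?_, by rw [dist_comm, hI.dist_iterate_add p j k]⟩
    rw [Function.iterate_add_apply, hk]

theorem pairwise_le_dist_of_mem_ball [MetricSpace M] (hI : Isometry I) {r : ℝ} {h : ℕ}
    (hn : n ≤ 2 * h) (hsep : ∀ k ≤ h, I^[k] p ≠ p → r ≤ dist p (I^[k] p)) :
    ((orbitSegment I p n ∩ Metric.ball p r) \ {p}).Pairwise fun x y => r ≤ dist x y := by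
  have hfar : ∀ k, I^[k] p ∈ Metric.ball p r → I^[k] p ≠ p → h < k := by
    intro k hball hkp
    by_contra! hkh
    exact (hsep k hkh hkp).not_gt (by rwa [Metric.mem_ball, dist_comm] at hball)
  rintro _ ⟨⟨⟨i, hi, rfl⟩, hib⟩, hip⟩ _ ⟨⟨⟨j, hj, rfl⟩, hjb⟩, hjp⟩ hne
  wlog hij : i ≤ j generalizing i j
  · exact dist_comm (I^[i] p) _ ▸ this j hj hjp hjb i hi hip hib hne.symm (by omega)
  obtain ⟨k, rfl⟩ := Nat.exists_eq_add_of_le hij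
  have := hfar i hib hip
  rw [hI.dist_iterate_add]
  exact hsep k (by omega) fun hkp => hne (by rw [Function.iterate_add_apply, hkp])

end OrbitSegment

/-- If in the metric space `M` any `r`-separated subset of any open `r`-ball has at most
`N` elements, then any orbit segment `{I^i(p) : i = 0, …, n}` of an isometry `I` of `M`
has at most `N + 1` distinct nearest neighbor distances. -/
theorem nnd_le_packing {M : Type*} [MetricSpace M] (N : ℕ)
    (hpack : ∀ r > (0 : ℝ), ∀ q : M, ∀ S : Set M, S ⊆ Metric.ball q r →
      (S.Pairwise fun x y => r ≤ dist x y) → S.encard ≤ N)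
    (I : M → M) (hI : Isometry I) (p : M) (n : ℕ)
    (X : Set M) (hX : X = {x | ∃ i : ℕ, i ≤ n ∧ x = I^[i] p})
    (h2 : X.Nontrivial) :
    (NND X).encard ≤ N + 1 := by
  change X = orbitSegment I p n at hX
  subst hX
  obtain ⟨k₀, hk₀, hk₀p, hr⟩ := exists_nnd_iterate_eq hI h2 (Nat.div_le_self n 2)
  set r := nnd (I^[n / 2] p) (orbitSegment I p n)
  have hr_pos : 0 < r := hr ▸ dist_pos.2 hk₀p.symm
  have hsep : ∀ k ≤ n - n / 2, I^[k] p ≠ p → r ≤ dist p (I^[k] p) := fun k hk hkp =>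
    nnd_iterate_le hI (Nat.div_le_self n 2) (by omega) hkp
  set S := (orbitSegment I p n ∩ Metric.ball p r) \ {p}
  have hNND : NND (orbitSegment I p n) ⊆ insert r (dist p '' S) := by
    rintro _ ⟨_, ⟨i, hi, rfl⟩, rfl⟩
    obtain ⟨k, hk, hkp, hv⟩ := exists_nnd_iterate_eq hI h2 hi
    have hle : nnd (I^[i] p) (orbitSegment I p n) ≤ r :=
      hr ▸ nnd_iterate_le hI hi (hk₀.trans (by omega)) hk₀p
    rcases hle.eq_or_lt with heq | hlt
    · exact Or.inl heq
    · refine Or.inr ⟨I^[k] p, ⟨⟨iterate_mem_orbitSegment (by omega), ?_⟩, hkp⟩,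
        hv.symm⟩
      rwa [Metric.mem_ball, dist_comm, ← hv]
  calc (NND (orbitSegment I p n)).encard
      ≤ (dist p '' S).encard + 1 := (encard_le_encard hNND).trans (encard_insert_le _ _)
    _ ≤ S.encard + 1 := by gcongr; exact encard_image_le _ _
    _ ≤ N + 1 := by
      gcongr
      exact hpack r hr_pos p S (sdiff_subset.trans inter_subset_right)
        (pairwise_le_dist_of_mem_ball hI (by omega) hsep)
end

section
/- Let Λ ⊂ ℝ^k (k ≥ 1) be a lattice, i.e. a discrete subgroup whose real span is all of ℝ^k, and let T = ℝ^k/Λ be the flat torus equipped with the quotient metric dist(x̄, ȳ) = inf_{λ ∈ Λ} ‖x − y − λ‖. For every v ∈ ℝ^k, every p ∈ T, and every n ∈ ℕ, if the set X = {p + i·v̄ : i = 0, ..., n} has at least two elements (where v̄ is the image of v in T), then |NND(X)| ≤ 3^k + 1. -/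
open Metric MeasureTheory Module
open scoped ENNReal RealInnerProductSpace

section Packing

variable {E : Type*} [NormedAddCommGroup E] [NormedSpace ℝ E] [FiniteDimensional ℝ E]

theorem Finset.card_le_three_pow_finrank_of_one_lt_dist (s : Finset E) (hs : ∀ x ∈ s, ‖x‖ ≤ 1)
    (hsep : (s : Set E).Pairwise fun x y => 1 < dist x y) : s.card ≤ 3 ^ finrank ℝ E := by
  borelize E
  let μ : Measure E := Measure.addHaar
  have hdisj : (s : Set E).PairwiseDisjoint fun x => ball x 2⁻¹ := fun x hx y hy hxy =>
    ball_disjoint_ball (by linarith [hsep hx hy hxy])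
  have hsub : ⋃ x ∈ s, ball x 2⁻¹ ⊆ ball (0 : E) (3 * 2⁻¹) := by
    simp only [Set.iUnion_subset_iff]
    intro x hx z hz
    rw [mem_ball_zero_iff]
    linarith [norm_le_norm_add_norm_sub' z x, mem_ball_iff_norm.mp hz, hs x hx]
  have hvol : (s.card : ℝ≥0∞) * μ (ball 0 2⁻¹) ≤ (3 ^ finrank ℝ E : ℕ) * μ (ball 0 2⁻¹) :=
    calc (s.card : ℝ≥0∞) * μ (ball 0 2⁻¹) = ∑ x ∈ s, μ (ball x 2⁻¹) := by
          simp [Measure.addHaar_ball_center]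
      _ = μ (⋃ x ∈ s, ball x 2⁻¹) :=
          (measure_biUnion_finset hdisj fun _ _ => measurableSet_ball).symm
      _ ≤ μ (ball 0 (3 * 2⁻¹)) := measure_mono hsub
      _ = (3 ^ finrank ℝ E : ℕ) * μ (ball 0 2⁻¹) := by
          rw [Measure.addHaar_ball_mul_of_pos μ 0 three_pos]; norm_cast
  exact_mod_cast (ENNReal.mul_le_mul_iff_left (measure_ball_pos μ 0 (by norm_num)).ne'
    measure_ball_lt_top.ne).mp hvol

end Packing

theorem QuotientAddGroup.exists_norm_eq_norm_mk {M : Type*} [NormedAddCommGroup M] [ProperSpace M]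
    (S : AddSubgroup M) [IsClosed (S : Set M)] (q : M ⧸ S) :
    ∃ w : M, (w : M ⧸ S) = q ∧ ‖w‖ = ‖q‖ := by
  obtain ⟨x, rfl⟩ := QuotientAddGroup.mk_surjective q
  obtain ⟨l, hl, hdist⟩ := IsClosed.exists_infDist_eq_dist ‹_› ⟨0, S.zero_mem⟩ x
  refine ⟨x - l, ?_, ?_⟩
  · simpa using (QuotientAddGroup.eq_zero_iff l).mpr hl
  · rw [QuotientAddGroup.norm_mk, hdist, dist_eq_norm]

section InnerProduct

variable {E : Type*} [NormedAddCommGroup E] [InnerProductSpace ℝ E]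

theorem one_lt_dist_inv_norm_smul {x y : E} (hx : x ≠ 0) (hy : y ≠ 0)
    (h : max ‖x‖ ‖y‖ < ‖x - y‖) : 1 < dist (‖x‖⁻¹ • x) (‖y‖⁻¹ • y) := by
  have hx' : 0 < ‖x‖ := norm_pos_iff.mpr hx
  have hy' : 0 < ‖y‖ := norm_pos_iff.mpr hy
  have hxy : ‖x - y‖ ^ 2 = ‖x‖ ^ 2 - 2 * ⟪x, y⟫ + ‖y‖ ^ 2 := norm_sub_sq_real x y
  have hinner : 2 * ⟪x, y⟫ < ‖x‖ * ‖y‖ := by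
    have := max_lt_iff.mp h
    rcases le_total ‖x‖ ‖y‖ with hle | hle <;> nlinarith
  have hsq : dist (‖x‖⁻¹ • x) (‖y‖⁻¹ • y) ^ 2 = 2 - 2 * ⟪x, y⟫ / (‖x‖ * ‖y‖) := by
    rw [dist_eq_norm, norm_sub_sq_real, real_inner_smul_left, real_inner_smul_right]
    simp only [norm_smul, norm_inv, norm_norm, inv_mul_cancel₀ hx'.ne', inv_mul_cancel₀ hy'.ne']
    field_simp
    ring
  have : 2 * ⟪x, y⟫ / (‖x‖ * ‖y‖) < 1 := (div_lt_one (by positivity)).mpr hinner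
  nlinarith [dist_nonneg (x := ‖x‖⁻¹ • x) (y := ‖y‖⁻¹ • y)]

theorem Finset.card_le_three_pow_finrank_of_max_norm_lt_norm_sub [FiniteDimensional ℝ E]
    (s : Finset E) (hs : 0 ∉ s)
    (hsep : (s : Set E).Pairwise fun x y => max ‖x‖ ‖y‖ < ‖x - y‖) :
    s.card ≤ 3 ^ finrank ℝ E := by
  classical
  have hne : ∀ x ∈ s, x ≠ 0 := fun x hx h => hs (h ▸ hx)
  have hsep' : ∀ x ∈ s, ∀ y ∈ s, x ≠ y → 1 < dist (‖x‖⁻¹ • x) (‖y‖⁻¹ • y) :=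
    fun x hx y hy hxy => one_lt_dist_inv_norm_smul (hne x hx) (hne y hy) (hsep hx hy hxy)
  have hinj : Set.InjOn (fun x : E => ‖x‖⁻¹ • x) s := fun x hx y hy h => by
    by_contra hxy
    exact absurd (hsep' x hx y hy hxy) (by simp [h])
  rw [← Finset.card_image_of_injOn hinj]
  refine (s.image _).card_le_three_pow_finrank_of_one_lt_dist ?_ ?_
  · simp only [Finset.mem_image, forall_exists_index, and_imp, forall_apply_eq_imp_iff₂]
    intro x hx
    rw [norm_smul, norm_inv, norm_norm, inv_mul_cancel₀ (norm_ne_zero_iff.mpr (hne x hx))]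
  · rw [Finset.coe_image]
    exact hinj.pairwise_image.mpr fun x hx y hy hxy => hsep' x hx y hy hxy

theorem QuotientAddGroup.encard_le_three_pow_finrank_of_max_norm_lt_norm_sub [FiniteDimensional ℝ E]
    (Λ : AddSubgroup E) [IsClosed (Λ : Set E)] (S : Set (E ⧸ Λ)) (hS : S.Finite) (h0 : 0 ∉ S)
    (hsep : S.Pairwise fun x y => max ‖x‖ ‖y‖ < ‖x - y‖) :
    S.encard ≤ 3 ^ finrank ℝ E := by
  classical
  choose lift hlift_mk hlift_norm using QuotientAddGroup.exists_norm_eq_norm_mk Λ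
  have hinj : Function.Injective lift := fun x y h => by rw [← hlift_mk x, h, hlift_mk]
  have hcard := (hS.toFinset.image lift).card_le_three_pow_finrank_of_max_norm_lt_norm_sub ?_ ?_
  · rw [← hinj.injOn.encard_image, ← hS.coe_toFinset, ← Finset.coe_image,
      Set.encard_coe_eq_coe_finsetCard]
    exact_mod_cast hcard
  · simp only [Finset.mem_image, Set.Finite.mem_toFinset, not_exists, not_and]
    intro q hq h
    rw [← hlift_mk q, h, QuotientAddGroup.mk_zero] at hq
    exact h0 hq
  · rw [Finset.coe_image, Set.Finite.coe_toFinset]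
    refine hinj.injOn.pairwise_image.mpr fun x hx y hy hxy => ?_
    calc max ‖lift x‖ ‖lift y‖ = max ‖x‖ ‖y‖ := by rw [hlift_norm, hlift_norm]
      _ < ‖x - y‖ := hsep hx hy hxy
      _ = ‖((lift x - lift y : E) : E ⧸ Λ)‖ := by
        rw [QuotientAddGroup.mk_sub, hlift_mk, hlift_mk]
      _ ≤ ‖lift x - lift y‖ := QuotientAddGroup.norm_mk_le_norm

end InnerProduct

section Progression

variable {Q : Type*} [NormedAddCommGroup Q]

def progression (p u : Q) (n : ℕ) : Set Q := {x | ∃ j : ℕ, j ≤ n ∧ x = p + j • u}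

def nonzeroMultipleNorms (u : Q) (t : ℕ) : Set ℝ :=
  (fun m : ℕ => ‖m • u‖) '' {m | 0 < m ∧ m ≤ t ∧ m • u ≠ 0}

def IsClosestReturn (u : Q) (r : ℕ) : Prop :=
  r • u ≠ 0 ∧ ∀ m : ℕ, 0 < m → m < r → m • u ≠ 0 → ‖r • u‖ < ‖m • u‖

theorem dist_add_nsmul_add_nsmul_of_le (p u : Q) {i j : ℕ} (h : j ≤ i) :
    dist (p + i • u) (p + j • u) = ‖(i - j) • u‖ := by
  obtain ⟨d, rfl⟩ := Nat.exists_eq_add_of_le h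
  rw [dist_eq_norm, add_nsmul, Nat.add_sub_cancel_left]
  congr 1
  abel

theorem image_dist_progression (p u : Q) {n i : ℕ} (hi : i ≤ n) :
    dist (p + i • u) '' (progression p u n \ {p + i • u}) =
      nonzeroMultipleNorms u (max i (n - i)) := by
  have hne {a b : ℕ} (h : b ≤ a) : p + a • u ≠ p + b • u ↔ (a - b) • u ≠ 0 := by
    rw [← dist_ne_zero, dist_add_nsmul_add_nsmul_of_le p u h, norm_ne_zero_iff]
  have hpos {m : ℕ} (h : m • u ≠ 0) : 0 < m := Nat.pos_of_ne_zero (by rintro rfl; simp at h)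
  ext c
  constructor
  · rintro ⟨y, ⟨⟨j, hj, rfl⟩, hy⟩, rfl⟩
    rcases le_total j i with hji | hij
    · have hu := (hne hji).mp (Ne.symm hy)
      exact ⟨i - j, ⟨hpos hu, by omega, hu⟩, (dist_add_nsmul_add_nsmul_of_le p u hji).symm⟩
    · have hu := (hne hij).mp hy
      refine ⟨j - i, ⟨hpos hu, by omega, hu⟩, ?_⟩
      rw [dist_comm, dist_add_nsmul_add_nsmul_of_le p u hij]
  · rintro ⟨m, ⟨hm, hmt, hu⟩, rfl⟩
    rcases le_or_gt m i with hmi | hmi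
    · have hsub : i - (i - m) = m := by omega
      refine ⟨p + (i - m) • u, ⟨⟨i - m, by omega, rfl⟩, ?_⟩, ?_⟩
      · exact Ne.symm ((hne (Nat.sub_le i m)).mpr (by rwa [hsub]))
      · rw [dist_add_nsmul_add_nsmul_of_le p u (Nat.sub_le i m), hsub]
    · have hsub : i + m - i = m := by omega
      refine ⟨p + (i + m) • u, ⟨⟨i + m, by omega, rfl⟩, ?_⟩, ?_⟩
      · exact (hne (Nat.le_add_right i m)).mpr (by rwa [hsub])
      · rw [dist_comm, dist_add_nsmul_add_nsmul_of_le p u (Nat.le_add_right i m), hsub]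

theorem nonzeroMultipleNorms_finite (u : Q) (t : ℕ) : (nonzeroMultipleNorms u t).Finite :=
  ((Set.finite_Iic t).subset fun _ hm => hm.2.1).image _

theorem nonzeroMultipleNorms_mono (u : Q) : Monotone (nonzeroMultipleNorms u) :=
  fun _ _ h => Set.image_mono fun _ hm => ⟨hm.1, hm.2.1.trans h, hm.2.2⟩

theorem isLeast_nnd_progression {p u : Q} {n i : ℕ} (h : (progression p u n).Nontrivial)
    (hi : i ≤ n) :
    IsLeast (nonzeroMultipleNorms u (max i (n - i))) (nnd (p + i • u) (progression p u n)) := by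
  obtain ⟨y, hy, hne⟩ := h.exists_ne (p + i • u)
  have hnonempty : (dist (p + i • u) '' (progression p u n \ {p + i • u})).Nonempty :=
    ⟨_, y, ⟨hy, hne⟩, rfl⟩
  rw [nnd, image_dist_progression p u hi] at *
  exact ⟨hnonempty.csInf_mem (nonzeroMultipleNorms_finite u _),
    fun c hc => csInf_le (nonzeroMultipleNorms_finite u _).bddBelow hc⟩

theorem IsLeast.exists_isClosestReturn {u : Q} {t : ℕ} {c : ℝ}
    (hc : IsLeast (nonzeroMultipleNorms u t) c) :
    ∃ r, 0 < r ∧ r ≤ t ∧ IsClosestReturn u r ∧ ‖r • u‖ = c := by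
  classical
  have hex : ∃ r, (0 < r ∧ r ≤ t ∧ r • u ≠ 0) ∧ ‖r • u‖ = c := hc.1
  obtain ⟨⟨hr, hrt, hr0⟩, hrc⟩ := Nat.find_spec hex
  refine ⟨Nat.find hex, hr, hrt, ⟨hr0, fun m hm hmr hm0 => ?_⟩, hrc⟩
  have hle : c ≤ ‖m • u‖ := hc.2 ⟨m, ⟨hm, by omega, hm0⟩, rfl⟩
  have hne : ‖m • u‖ ≠ c := fun h => Nat.find_min hex hmr ⟨⟨hm, by omega, hm0⟩, h⟩
  rw [hrc]
  exact lt_of_le_of_ne hle (Ne.symm hne)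

theorem IsClosestReturn.max_norm_lt_norm_sub {u : Q} {r₁ r₂ : ℕ} (h₁ : IsClosestReturn u r₁)
    (h₂ : IsClosestReturn u r₂) (h₁₂ : r₁ < r₂) (h₂₁ : r₂ < 2 * r₁) :
    max ‖r₁ • u‖ ‖r₂ • u‖ < ‖r₁ • u - r₂ • u‖ := by
  have hd : r₂ • u = r₁ • u + (r₂ - r₁) • u := by rw [← add_nsmul, Nat.add_sub_cancel' h₁₂.le]
  have hlt : ‖r₂ • u‖ < ‖r₁ • u‖ := h₂.2 r₁ (by omega) h₁₂ h₁.1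
  have hd0 : (r₂ - r₁) • u ≠ 0 := fun h => by
    rw [h, add_zero] at hd
    exact (hd ▸ hlt).false
  rw [show r₁ • u - r₂ • u = -((r₂ - r₁) • u) by rw [hd]; abel, norm_neg]
  have := h₁.2 _ (by omega) (by omega) hd0
  exact max_lt this (hlt.trans this)

-- `n - n / 2 = ⌈n / 2⌉`
theorem NND_progression_subset {p u : Q} {n : ℕ} (h : (progression p u n).Nontrivial) :
    NND (progression p u n) ⊆ {c | IsLeast (nonzeroMultipleNorms u (n - n / 2)) c} ∪
      (fun r : ℕ => ‖r • u‖) '' {r | IsClosestReturn u r ∧ n - n / 2 < r ∧ r ≤ n} := by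
  rintro _ ⟨_, ⟨i, hi, rfl⟩, rfl⟩
  have hleast := isLeast_nnd_progression h hi
  obtain ⟨r, hr, hrt, hret, hrc⟩ := hleast.exists_isClosestReturn
  rcases le_or_gt r (n - n / 2) with hra | hra
  · refine Or.inl ⟨⟨r, ⟨hr, hra, hret.1⟩, hrc⟩, fun c hc => hleast.2 ?_⟩
    exact nonzeroMultipleNorms_mono u (by omega) hc
  · exact Or.inr ⟨r, ⟨hret, hra, by omega⟩, hrc⟩

theorem encard_NND_progression_le {p u : Q} {n : ℕ} {N : ℕ∞}
    (hpack : ∀ S : Set Q, S.Finite → 0 ∉ S →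
      S.Pairwise (fun x y => max ‖x‖ ‖y‖ < ‖x - y‖) → S.encard ≤ N)
    (h : (progression p u n).Nontrivial) : (NND (progression p u n)).encard ≤ N + 1 := by
  set R := {r | IsClosestReturn u r ∧ n - n / 2 < r ∧ r ≤ n}
  have hR : ((· • u) '' R).encard ≤ N := by
    refine hpack _ (((Set.finite_Iic n).subset fun r hr => hr.2.2).image _) ?_ ?_
    · rintro ⟨r, hr, hr0⟩
      exact hr.1.1 hr0
    · rintro _ ⟨r₁, ⟨hr₁, ha₁, hn₁⟩, rfl⟩ _ ⟨r₂, ⟨hr₂, ha₂, hn₂⟩, rfl⟩ hne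
      rcases lt_or_gt_of_ne (ne_of_apply_ne (· • u) hne) with h₁₂ | h₂₁
      · exact hr₁.max_norm_lt_norm_sub hr₂ h₁₂ (by omega)
      · rw [max_comm, norm_sub_rev]
        exact hr₂.max_norm_lt_norm_sub hr₁ h₂₁ (by omega)
  have hnorms : (fun r : ℕ => ‖r • u‖) '' R = norm '' ((· • u) '' R) := by rw [Set.image_image]
  calc (NND (progression p u n)).encard
      ≤ {c | IsLeast (nonzeroMultipleNorms u (n - n / 2)) c}.encard +
          ((fun r : ℕ => ‖r • u‖) '' R).encard :=
        (Set.encard_le_encard (NND_progression_subset h)).trans (Set.encard_union_le _ _)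
    _ ≤ 1 + N := by
        gcongr
        · exact Set.encard_le_one_iff_subsingleton.mpr fun _ h₁ _ h₂ => h₁.unique h₂
        · exact hnorms ▸ (Set.encard_image_le _ _).trans hR
    _ = N + 1 := add_comm _ _

end Progression

theorem flat_torus_bounded_geodesic_combinatorics_general (k : ℕ)
    (Λ : AddSubgroup (EuclideanSpace ℝ (Fin k))) [DiscreteTopology Λ]
    (v : EuclideanSpace ℝ (Fin k)) (p : EuclideanSpace ℝ (Fin k) ⧸ Λ) (n : ℕ)
    (X : Set (EuclideanSpace ℝ (Fin k) ⧸ Λ))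
    (hX : X = {x | ∃ i : ℕ, i ≤ n ∧
      x = p + (i : ℕ) • (QuotientAddGroup.mk v : EuclideanSpace ℝ (Fin k) ⧸ Λ)})
    (h2 : X.Nontrivial) :
    (NND X).encard ≤ 3 ^ k + 1 := by
  subst hX
  refine encard_NND_progression_le (fun S hS h0 hsep => ?_) h2
  simpa [finrank_euclideanSpace_fin] using
    QuotientAddGroup.encard_le_three_pow_finrank_of_max_norm_lt_norm_sub Λ S hS h0 hsep

/-- Flat tori have `(3^k + 1)`-bounded geodesic combinatorics: in the flat torus
`ℝ^k / Λ` (where `Λ` is a lattice, i.e. a discrete subgroup spanning `ℝ^k`, and the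
quotient carries the quotient metric), any set of equally spaced points
`{p + i • v̄ : i = 0, …, n}` along a geodesic with at least two elements has at most
`3^k + 1` distinct nearest neighbor distances. -/
theorem flat_torus_bounded_geodesic_combinatorics (k : ℕ) (hk : 1 ≤ k)
    (Λ : AddSubgroup (EuclideanSpace ℝ (Fin k))) [DiscreteTopology Λ]
    (hspan : Submodule.span ℝ (Λ : Set (EuclideanSpace ℝ (Fin k))) = ⊤)
    (v : EuclideanSpace ℝ (Fin k)) (p : EuclideanSpace ℝ (Fin k) ⧸ Λ) (n : ℕ)
    (X : Set (EuclideanSpace ℝ (Fin k) ⧸ Λ))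
    (hX : X = {x | ∃ i : ℕ, i ≤ n ∧
      x = p + (i : ℕ) • (QuotientAddGroup.mk v : EuclideanSpace ℝ (Fin k) ⧸ Λ)})
    (h2 : X.Nontrivial) :
    (NND X).encard ≤ 3 ^ k + 1 :=
  flat_torus_bounded_geodesic_combinatorics_general k Λ v p n X hX h2
end

section
/- Let M be a metric space, I : M → M a distance-preserving map, p ∈ M, and n ∈ ℕ. Suppose the set O_n = {I^i(p) : i = 0, ..., n} has at least two elements. Then for every i with 0 ≤ i ≤ n, nnd(I^i(p), O_n) = min{ dist(p, I^j(p)) : 1 ≤ j ≤ max(i, n − i) and I^j(p) ≠ p }. -/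
private lemma iter_dist {M : Type*} [MetricSpace M] {I : M → M} (hI : Isometry I)
    (m j : ℕ) (p : M) : dist (I^[m + j] p) (I^[m] p) = dist (I^[j] p) p := by
  have hm : Isometry (I^[m]) := by
    induction m with
    | zero => simpa using isometry_id
    | succ m ih => rw [Function.iterate_succ]; exact ih.comp hI
  rw [Function.iterate_add_apply, hm.dist_eq]

/-- For an orbit segment `O_n = {I^i(p) : i = 0, …, n}` of an isometry with at least two
elements, the nearest neighbor distance of `I^i(p)` in `O_n` is the minimum of the
distances `dist(p, I^j(p))` over `1 ≤ j ≤ max(i, n - i)` with `I^j(p) ≠ p`. -/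
theorem nnd_orbit_eq {M : Type*} [MetricSpace M]
    (I : M → M) (hI : Isometry I) (p : M) (n : ℕ)
    (O : Set M) (hO : O = {x | ∃ i : ℕ, i ≤ n ∧ x = I^[i] p})
    (h2 : O.Nontrivial) :
    ∀ i : ℕ, i ≤ n →
      nnd (I^[i] p) O =
        sInf {d | ∃ j : ℕ, 1 ≤ j ∧ j ≤ max i (n - i) ∧ I^[j] p ≠ p ∧ d = dist p (I^[j] p)} := by
  subst hO
  intro i hi
  unfold nnd
  congr 1
  ext d
  simp only [Set.mem_image, Set.mem_diff, Set.mem_setOf_eq, Set.mem_singleton_iff]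
  constructor
  · rintro ⟨y, ⟨⟨k, hk, rfl⟩, hne⟩, rfl⟩
    rcases le_or_gt k i with h | h
    · -- j = i - k
      have hik : k + (i - k) = i := by omega
      have hd : dist (I^[i] p) (I^[k] p) = dist (I^[i - k] p) p := by
        have := iter_dist hI k (i - k) p; rwa [hik] at this
      have hki : k ≠ i := fun h => hne (by rw [h])
      refine ⟨i - k, by omega, le_max_of_le_left (Nat.sub_le i k), ?_, ?_⟩
      · intro hzero
        apply hne
        have : dist (I^[i] p) (I^[k] p) = 0 := by
          rw [hd, hzero, dist_self]
        exact (dist_eq_zero.mp this).symm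
      · rw [hd, dist_comm]
    · -- j = k - i
      have hik : i + (k - i) = k := by omega
      have hd : dist (I^[i] p) (I^[k] p) = dist (I^[k - i] p) p := by
        have := iter_dist hI i (k - i) p; rw [hik] at this; rw [dist_comm, this]
      refine ⟨k - i, by omega, le_max_of_le_right (by omega), ?_, ?_⟩
      · intro hzero
        apply hne
        have : dist (I^[i] p) (I^[k] p) = 0 := by
          rw [hd, hzero, dist_self]
        exact (dist_eq_zero.mp this).symm
      · rw [hd, dist_comm]
  · rintro ⟨j, hj1, hj2, hjp, rfl⟩
    rcases le_or_gt j i with h | h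
    · -- k = i - j
      have hik : (i - j) + j = i := by omega
      have hd : dist (I^[i] p) (I^[i - j] p) = dist (I^[j] p) p := by
        have := iter_dist hI (i - j) j p; rwa [hik] at this
      refine ⟨I^[i - j] p, ⟨⟨i - j, by omega, rfl⟩, ?_⟩, by rw [hd, dist_comm]⟩
      intro heq
      apply hjp
      have : dist (I^[j] p) p = 0 := by rw [← hd, heq, dist_self]
      exact dist_eq_zero.mp this
    · -- k = i + j, need j ≤ n - i
      have hj' : j ≤ n - i := by
        rcases max_cases i (n - i) with ⟨he, _⟩ | ⟨he, _⟩ <;> omega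
      have hd : dist (I^[i] p) (I^[i + j] p) = dist (I^[j] p) p := by
        rw [dist_comm, iter_dist hI]
      refine ⟨I^[i + j] p, ⟨⟨i + j, by omega, rfl⟩, ?_⟩, by rw [hd, dist_comm]⟩
      intro heq
      apply hjp
      have : dist (I^[j] p) p = 0 := by rw [← hd, ← heq, dist_self]
      exact dist_eq_zero.mp this
end

section
/- Let M be a metric space, I : M → M a distance-preserving map, p ∈ M, and n ∈ ℕ. Suppose the set O_n = {I^i(p) : i = 0, ..., n} has at least two elements. Then for all i, j with 0 ≤ i ≤ j ≤ ⌊n/2⌋, nnd(I^i(p), O_n) ≤ nnd(I^j(p), O_n). -/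
lemma isometry_iterate' {M : Type*} [MetricSpace M] {I : M → M} (hI : Isometry I) :
    ∀ a : ℕ, Isometry (I^[a])
  | 0 => isometry_id
  | (a + 1) => by
      rw [Function.iterate_succ']
      exact hI.comp (isometry_iterate' hI a)

lemma iterate_dist_shift {M : Type*} [MetricSpace M] {I : M → M} (hI : Isometry I)
    (p : M) (a b : ℕ) : dist (I^[a] p) (I^[a + b] p) = dist p (I^[b] p) := by
  rw [Function.iterate_add_apply]
  exact (isometry_iterate' hI a).dist_eq _ _

/-- For an orbit segment `O_n = {I^i(p) : i = 0, …, n}` of an isometry with at least two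
elements, the nearest neighbor distances `nnd(I^i(p), O_n)` are nondecreasing in `i`
for `0 ≤ i ≤ ⌊n/2⌋`. -/
theorem nnd_orbit_monotone {M : Type*} [MetricSpace M]
    (I : M → M) (hI : Isometry I) (p : M) (n : ℕ)
    (O : Set M) (hO : O = {x | ∃ i : ℕ, i ≤ n ∧ x = I^[i] p})
    (h2 : O.Nontrivial) :
    ∀ i j : ℕ, i ≤ j → j ≤ n / 2 → nnd (I^[i] p) O ≤ nnd (I^[j] p) O := by
  intro i j hij hj
  have hne : (dist (I^[j] p) '' (O \ {I^[j] p})).Nonempty := by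
    obtain ⟨x, hx, y, hy, hxy⟩ := h2
    rcases eq_or_ne x (I^[j] p) with h | h
    · exact ⟨_, ⟨y, ⟨hy, by simp [← h, Ne.symm hxy]⟩, rfl⟩⟩
    · exact ⟨_, ⟨x, ⟨hx, h⟩, rfl⟩⟩
  apply le_csInf hne
  rintro d ⟨z, ⟨hzO, hzne⟩, rfl⟩
  rw [hO] at hzO
  obtain ⟨k, hk, rfl⟩ := hzO
  set m := if j ≤ k then k - j else j - k with hm
  have him : i + m ≤ n := by
    have := Nat.div_mul_le_self n 2
    by_cases h : j ≤ k <;> simp only [hm, if_pos, if_neg, h, if_true, if_false] <;> omega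
  have hjk : dist (I^[j] p) (I^[k] p) = dist p (I^[m] p) := by
    by_cases h : j ≤ k
    · rw [hm, if_pos h, ← iterate_dist_shift hI p j (k - j), Nat.add_sub_cancel' h]
    · rw [hm, if_neg h, dist_comm, ← iterate_dist_shift hI p k (j - k),
        Nat.add_sub_cancel' (le_of_not_ge h)]
  have hdist : dist (I^[i] p) (I^[i + m] p) = dist (I^[j] p) (I^[k] p) := by
    rw [iterate_dist_shift hI p i m, hjk]
  have hpos : 0 < dist (I^[j] p) (I^[k] p) := dist_pos.mpr (Ne.symm (by simpa using hzne))
  have hmem : I^[i + m] p ∈ O \ {I^[i] p} := by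
    refine ⟨by rw [hO]; exact ⟨i + m, him, rfl⟩, ?_⟩
    intro hEq
    rw [Set.mem_singleton_iff] at hEq
    rw [hEq] at hdist
    simp at hdist
    exact hzne (Set.mem_singleton_iff.mpr hdist.symm)
  have hbdd : BddBelow (dist (I^[i] p) '' (O \ {I^[i] p})) :=
    ⟨0, by rintro d ⟨w, _, rfl⟩; exact dist_nonneg⟩
  calc nnd (I^[i] p) O = sInf (dist (I^[i] p) '' (O \ {I^[i] p})) := rfl
    _ ≤ dist (I^[i] p) (I^[i + m] p) :=
        csInf_le hbdd ⟨_, hmem, rfl⟩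
    _ = dist (I^[j] p) (I^[k] p) := hdist
end

section
/- Let M be a compact metric space, x : ℕ → M a sequence, and K ∈ ℕ. Suppose that for every n ∈ ℕ for which the set X_n = {x_0, ..., x_n} has at least two elements, |NND(X_n)| ≤ K. Then the set of points of X = {x_i : i ∈ ℕ} that are isolated in X (with the subspace topology) is finite. -/
/-!
Write `X = range x` and `X_n = {x_0, …, x_n}`. An isolated point `p` of `X` has
`nnd p X > 0`, and in a compact space the points of `X` with `nnd · X ≥ δ > 0` are
`δ`-separated, hence finitely many. So if infinitely many points of `X` were isolated,
`nnd · X` would take infinitely many values on them, and we could pick `K + 2` of them with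
pairwise distinct values. Since `nnd p X_n → nnd p X` as `n → ∞`, for large `n` these points
all lie in `X_n` and still have pairwise distinct nearest neighbor distances in `X_n`,
contradicting `|NND(X_n)| ≤ K`.
-/

open Set Filter Topology

section

variable {M : Type*} [MetricSpace M]

lemma nnd_le_dist_s12 {p q : M} {X : Set M} (hq : q ∈ X) (hqp : q ≠ p) : nnd p X ≤ dist p q :=
  csInf_le ⟨0, by rintro _ ⟨_, _, rfl⟩; exact dist_nonneg⟩ ⟨q, ⟨hq, hqp⟩, rfl⟩

lemma le_nnd {p : M} {X : Set M} {r : ℝ} (hX : (X \ {p}).Nonempty)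
    (h : ∀ q ∈ X, q ≠ p → r ≤ dist p q) : r ≤ nnd p X :=
  le_csInf (hX.image _) (by rintro _ ⟨q, ⟨hq, hqp⟩, rfl⟩; exact h q hq hqp)

lemma nnd_le_nnd_of_subset {p : M} {S X : Set M} (hSX : S ⊆ X) (hS : (S \ {p}).Nonempty) :
    nnd p X ≤ nnd p S :=
  le_nnd hS fun _ hq hqp => nnd_le_dist_s12 (hSX hq) hqp

lemma nnd_pos_of_isolated {p : M} {X U : Set M} (hU : IsOpen U) (hpU : p ∈ U)
    (hiso : ∀ q ∈ X, q ∈ U → q = p) (hX : (X \ {p}).Nonempty) : 0 < nnd p X := by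
  obtain ⟨r, hr, hball⟩ := Metric.isOpen_iff.1 hU p hpU
  refine hr.trans_le (le_nnd hX fun q hq hqp => ?_)
  by_contra! hlt
  exact hqp (hiso q hq (hball (Metric.mem_ball'.2 hlt)))

lemma Set.Pairwise.finite_of_le_dist [CompactSpace M] {T : Set M} {δ : ℝ} (hδ : 0 < δ)
    (hT : T.Pairwise fun p q => δ ≤ dist p q) : T.Finite := by
  obtain ⟨C, hC, hcover⟩ :=
    Metric.totallyBounded_iff.1 (isCompact_univ (X := M)).totallyBounded (δ / 2) (half_pos hδ)
  have hsub : T ⊆ ⋃ c ∈ C, T ∩ Metric.ball c (δ / 2) := fun p hp => by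
    obtain ⟨c, hc, hpc⟩ := mem_iUnion₂.1 (hcover (mem_univ p))
    exact mem_iUnion₂.2 ⟨c, hc, hp, hpc⟩
  refine (hC.biUnion fun c _ => Subsingleton.finite ?_).subset hsub
  rintro p ⟨hp, hpc⟩ q ⟨hq, hqc⟩
  by_contra hpq
  have := dist_triangle_right p q c
  linarith [hT hp hq hpq, Metric.mem_ball.1 hpc, Metric.mem_ball.1 hqc]

lemma finite_setOf_le_nnd [CompactSpace M] {δ : ℝ} (hδ : 0 < δ) (X : Set M) :
    {p ∈ X | δ ≤ nnd p X}.Finite :=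
  Set.Pairwise.finite_of_le_dist hδ fun _ hp _ hq hpq =>
    hp.2.trans (nnd_le_dist_s12 hq.1 hpq.symm)

lemma finite_of_finite_image_nnd [CompactSpace M] {S X : Set M} (hSX : S ⊆ X)
    (hpos : ∀ p ∈ S, 0 < nnd p X) (hfin : ((nnd · X) '' S).Finite) : S.Finite := by
  refine hfin.of_finite_fibers _ fun _ ⟨p, hp, hpδ⟩ =>
    (finite_setOf_le_nnd (hpos p hp) X).subset fun q ⟨hq, hqp⟩ => ⟨hSX hq, ?_⟩
  exact (hpδ.trans hqp.symm).le

lemma eventually_mem_of_monotone {α ι : Type*} [Preorder ι] {s : ι → Set α} (hs : Monotone s)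
    {q : α} (hq : q ∈ ⋃ i, s i) : ∀ᶠ i in atTop, q ∈ s i := by
  obtain ⟨j, hj⟩ := mem_iUnion.1 hq
  exact (eventually_ge_atTop j).mono fun i hi => hs hi hj

variable {ι : Type*} [Preorder ι] {s : ι → Set M}

lemma tendsto_nnd_of_monotone (hs : Monotone s) {X : Set M} (hX : ⋃ i, s i = X) {p : M}
    (hXp : (X \ {p}).Nonempty) : Tendsto (fun i => nnd p (s i)) atTop (𝓝 (nnd p X)) := by
  subst hX
  refine tendsto_order.2 ⟨fun a ha => ?_, fun b hb => ?_⟩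
  · obtain ⟨q, hq, hqp⟩ := hXp
    filter_upwards [eventually_mem_of_monotone hs hq] with i hqi
    exact ha.trans_le (nnd_le_nnd_of_subset (subset_iUnion s i) ⟨q, hqi, hqp⟩)
  · obtain ⟨_, ⟨q, ⟨hq, hqp⟩, rfl⟩, hqb⟩ := exists_lt_of_csInf_lt (hXp.image _) hb
    filter_upwards [eventually_mem_of_monotone hs hq] with i hqi
    exact (nnd_le_dist_s12 hqi hqp).trans_lt hqb

lemma eventually_injOn_nnd_of_monotone (hs : Monotone s) {X : Set M} (hX : ⋃ i, s i = X)
    {P : Set M} (hP : P.Finite) (hXP : ∀ p ∈ P, (X \ {p}).Nonempty)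
    (hinj : InjOn (nnd · X) P) : ∀ᶠ i in atTop, InjOn (nnd · (s i)) P := by
  have hpair : ∀ p ∈ P, ∀ q ∈ P,
      ∀ᶠ i in atTop, nnd p (s i) = nnd q (s i) → p = q := by
    intro p hp q hq
    by_cases hpq : p = q
    · exact Eventually.of_forall fun _ _ => hpq
    have hlim := (tendsto_nnd_of_monotone hs hX (hXP p hp)).prodMk_nhds
      (tendsto_nnd_of_monotone hs hX (hXP q hq))
    filter_upwards [hlim.eventually ((isOpen_ne_fun continuous_fst continuous_snd).eventually_mem
      fun h => hpq (hinj hp hq h))] with i hi heq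
    exact absurd heq hi
  filter_upwards [(eventually_all_finite hP).2 fun p hp => (eventually_all_finite hP).2
    (hpair p hp)] with i hi
  exact fun p hp q hq => hi p hp q hq

end

/-- Let `M` be a compact metric space and `x : ℕ → M` a sequence such that every initial
segment `X_n = {x_0, …, x_n}` with at least two elements has at most `K` distinct nearest
neighbor distances.  Then only finitely many points of `X = {x_i : i ∈ ℕ}` are isolated
in `X`. -/
theorem finitely_many_isolated_points {M : Type*} [MetricSpace M] [CompactSpace M]
    (x : ℕ → M) (K : ℕ)
    (hK : ∀ n : ℕ, ({y | ∃ i : ℕ, i ≤ n ∧ y = x i} : Set M).Nontrivial →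
      (NND {y | ∃ i : ℕ, i ≤ n ∧ y = x i}).encard ≤ K) :
    {p | p ∈ Set.range x ∧ ∃ U : Set M, IsOpen U ∧ p ∈ U ∧
      ∀ q ∈ Set.range x, q ∈ U → q = p}.Finite := by
  set s : ℕ → Set M := fun n => {y | ∃ i : ℕ, i ≤ n ∧ y = x i}
  have hs : Monotone s := fun m n hmn y ⟨i, hi, hy⟩ => ⟨i, hi.trans hmn, hy⟩
  have hX : ⋃ n, s n = range x := by
    ext y
    simp only [s, mem_iUnion, mem_ofPred_eq, mem_range]
    exact ⟨fun ⟨_, i, _, hy⟩ => ⟨i, hy.symm⟩,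
      fun ⟨i, hy⟩ => ⟨i, i, le_rfl, hy.symm⟩⟩
  set S := {p | p ∈ Set.range x ∧ ∃ U : Set M, IsOpen U ∧ p ∈ U ∧
      ∀ q ∈ Set.range x, q ∈ U → q = p}
  by_contra hSinf
  have hXp : ∀ p, (range x \ {p}).Nonempty := fun p =>
    ((Infinite.mono (fun _ hq => hq.1) hSinf).sdiff (finite_singleton p)).nonempty
  have hpos : ∀ p ∈ S, 0 < nnd p (range x) := fun p ⟨_, _, hU, hpU, hiso⟩ =>
    nnd_pos_of_isolated hU hpU hiso (hXp p)
  have hvalues : ((nnd · (range x)) '' S).Infinite := fun h =>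
    hSinf (finite_of_finite_image_nnd (fun _ hp => hp.1) hpos h)
  obtain ⟨S', hS'S, hbij⟩ := exists_subset_bijOn S (nnd · (range x))
  have hS' : S'.Infinite := Infinite.of_image _ (by rwa [hbij.image_eq])
  -- `K + 2` points rather than `K + 1`, so that `s n` is also nontrivial
  obtain ⟨P, hPS', hcard⟩ := hS'.exists_subset_card_eq (K + 2)
  obtain ⟨n, hPn, hinj⟩ := ((eventually_all_finite P.finite_toSet).2 (fun p hp =>
    eventually_mem_of_monotone hs (hX ▸ (hS'S (hPS' hp)).1)) |>.and
    (eventually_injOn_nnd_of_monotone hs hX P.finite_toSet (fun p _ => hXp p)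
      (hbij.injOn.mono hPS'))).exists
  have hnontriv : (s n).Nontrivial :=
    (Finset.one_lt_card_iff_nontrivial.1 (by omega)).mono hPn
  have hle : ((K + 2 : ℕ) : ℕ∞) ≤ K := calc
    _ = (P : Set M).encard := by rw [encard_coe_eq_coe_finsetCard, hcard]
    _ = ((nnd · (s n)) '' P).encard := hinj.encard_image.symm
    _ ≤ (NND (s n)).encard := encard_mono (image_mono hPn)
    _ ≤ K := hK n hnontriv
  exact absurd (by exact_mod_cast hle) (by omega : ¬ K + 2 ≤ K)
end

section
/- Let z be a point of the unit circle {w ∈ ℂ : |w| = 1} and θ ∈ ℝ. For every n ∈ ℕ, if the set X = {e^{ikθ}·z : k = 0, ..., n}, regarded as a subset of ℂ with the Euclidean metric, has at least two elements, then |NND(X)| ≤ 3. -/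
/-!
Write `α` for `θ` in `ℝ/2πℤ`. The distance between the `j`-th and the `k`-th point is an
increasing function of `‖(k - j) • α‖`, so the nearest neighbor distance of the `k`-th point
is the least nonzero value of `m ↦ ‖m • α‖` on `m ≤ max k (n - k)`. As `max k (n - k)` runs
through `[⌈n/2⌉, n]`, this minimum changes only at record indices `r > n/2`. The lifts to
`[-π, π]` of two records `a < b < 2a` have opposite signs, since otherwise `b - a < a` would
beat `a`; hence there are at most two such records, and at most three nearest neighbor
distances.
-/

open Set Real

theorem mul_neg_of_abs_lt_of_abs_lt_abs_sub {R : Type*} [Field R] [LinearOrder R]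
    [IsStrictOrderedRing R] {x y : R} (hyx : |y| < |x|) (hx : |x| < |y - x|) :
    x * y < 0 := by
  rcases abs_cases x with ⟨_, _⟩ | ⟨_, _⟩ <;> rcases abs_cases y with ⟨_, _⟩ | ⟨_, _⟩ <;>
    rcases abs_cases (y - x) with ⟨_, _⟩ | ⟨_, _⟩ <;> nlinarith

theorem Set.encard_le_two_of_pairwise_mul_neg {ι R : Type*} [Ring R] [LinearOrder R]
    [IsStrictOrderedRing R] {S : Set ι} {f : ι → R}
    (hS : S.Pairwise fun a b => f a * f b < 0) : S.encard ≤ 2 := by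
  have hsign : ∀ P : R → Prop, (∀ x y, P x → P y → 0 ≤ x * y) →
      {a ∈ S | P (f a)}.encard ≤ 1 := by
    refine fun P hP => encard_le_one_iff.mpr fun a b ha hb => ?_
    by_contra hab
    exact (hS ha.1 hb.1 hab).not_ge (hP _ _ ha.2 hb.2)
  calc S.encard ≤ ({a ∈ S | f a ≤ 0} ∪ {a ∈ S | 0 < f a}).encard :=
        encard_mono fun a ha => (le_or_gt (f a) 0).imp (⟨ha, ·⟩) (⟨ha, ·⟩)
    _ ≤ 1 + 1 := (encard_union_le _ _).trans <| add_le_add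
        (hsign _ fun _ _ => mul_nonneg_of_nonpos_of_nonpos)
        (hsign _ fun _ _ hx hy => (mul_pos hx hy).le)
    _ = 2 := by norm_num

namespace AddCircle

theorem exists_coe_eq_and_abs_eq_norm {p : ℝ} (x : AddCircle p) :
    ∃ u : ℝ, (u : AddCircle p) = x ∧ |u| = ‖x‖ := by
  induction x using QuotientAddGroup.induction_on with
  | H x =>
    refine ⟨x - round (p⁻¹ * x) * p, ?_, (norm_eq p).symm⟩
    rw [coe_sub, sub_eq_self, coe_eq_zero_iff]
    exact ⟨round (p⁻¹ * x), zsmul_eq_mul _ _⟩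

end AddCircle

namespace ThreeGap

section Records

variable {β : Type*} [Zero β]

def IsRecord [LT β] (d : ℕ → β) (r : ℕ) : Prop :=
  d r ≠ 0 ∧ ∀ m < r, d m ≠ 0 → d r < d m

theorem IsRecord.of_comp {γ : Type*} [LinearOrder β] [Preorder γ] [Zero γ] {g : β → γ}
    {w : ℕ → β} {s : Set β} (hg : StrictMonoOn g s) (hw : ∀ m, w m ∈ s) (h0 : (0 : β) ∈ s)
    (hg0 : g 0 = 0) {r : ℕ} (hr : IsRecord (g ∘ w) r) : IsRecord w r := by
  have hne : ∀ m, g (w m) ≠ 0 → w m ≠ 0 := fun m h hm => h (by rw [hm, hg0])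
  have hne' : ∀ m, w m ≠ 0 → g (w m) ≠ 0 := fun m hm h =>
    hm (hg.injOn (hw m) h0 (h.trans hg0.symm))
  exact ⟨hne r hr.1,
    fun m hm hm0 => (hg.lt_iff_lt (hw r) (hw m)).mp (hr.2 m hm (hne' m hm0))⟩

theorem finite_image_nonzero (d : ℕ → β) (t : ℕ) :
    (d '' {m | m ≤ t ∧ d m ≠ 0}).Finite :=
  ((finite_Iic t).subset fun _ hm => hm.1).image d

variable [ConditionallyCompleteLinearOrder β]

/-- Like `nnd`, this is the junk value `sInf ∅` when `d` vanishes on `[0, t]`. -/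
noncomputable def minNonzero (d : ℕ → β) (t : ℕ) : β :=
  sInf (d '' {m | m ≤ t ∧ d m ≠ 0})

theorem minNonzero_of_isRecord {d : ℕ → β} {r : ℕ} (hr : IsRecord d r) :
    minNonzero d r = d r := by
  refine le_antisymm (csInf_le (finite_image_nonzero d r).bddBelow ⟨r, ⟨le_rfl, hr.1⟩, rfl⟩)
    (le_csInf ⟨_, r, ⟨le_rfl, hr.1⟩, rfl⟩ ?_)
  rintro _ ⟨m, ⟨hmr, hm⟩, rfl⟩
  rcases hmr.lt_or_eq with hmr | rfl
  · exact (hr.2 m hmr hm).le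
  · exact le_rfl

theorem minNonzero_succ_of_not_isRecord {d : ℕ → β} {t : ℕ} (ht : ¬IsRecord d (t + 1)) :
    minNonzero d (t + 1) = minNonzero d t := by
  unfold minNonzero
  by_cases h0 : d (t + 1) = 0
  · congr 2
    ext m
    simp only [mem_ofPred_eq, Nat.le_add_one_iff]
    grind
  · obtain ⟨m, hmt, hm0, hle⟩ : ∃ m < t + 1, d m ≠ 0 ∧ d m ≤ d (t + 1) := by
      simpa [IsRecord, h0] using ht
    have hset : {m | m ≤ t + 1 ∧ d m ≠ 0} = insert (t + 1) {m | m ≤ t ∧ d m ≠ 0} := by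
      ext k
      simp only [mem_ofPred_eq, mem_insert_iff, Nat.le_add_one_iff]
      grind
    have hmem : d m ∈ d '' {m | m ≤ t ∧ d m ≠ 0} := ⟨m, ⟨Nat.lt_succ_iff.mp hmt, hm0⟩, rfl⟩
    have hbdd := (finite_image_nonzero d t).bddBelow
    rw [hset, image_insert_eq, csInf_insert hbdd ⟨_, hmem⟩]
    exact inf_eq_right.mpr ((csInf_le hbdd hmem).trans hle)

theorem image_minNonzero_Icc_subset (d : ℕ → β) (l n : ℕ) :
    minNonzero d '' Icc l n ⊆
      insert (minNonzero d l) (d '' {r | l < r ∧ r ≤ n ∧ IsRecord d r}) := by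
  rintro _ ⟨t, ⟨hlt, htn⟩, rfl⟩
  induction t, hlt using Nat.le_induction with
  | base => exact mem_insert _ _
  | succ t hlt ih =>
    by_cases hr : IsRecord d (t + 1)
    · exact mem_insert_of_mem _
        ⟨t + 1, ⟨by omega, htn, hr⟩, (minNonzero_of_isRecord hr).symm⟩
    · rw [minNonzero_succ_of_not_isRecord hr]
      exact ih (by omega)

end Records

theorem nnd_image_Iic {M : Type*} [MetricSpace M] {x : ℕ → M} {d : ℕ → ℝ}
    (hd : ∀ j k, dist (x j) (x k) = d (Nat.dist j k)) {n k : ℕ} (hk : k ≤ n) :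
    nnd (x k) (x '' Iic n) = minNonzero d (max k (n - k)) := by
  unfold nnd minNonzero
  congr 1
  ext r
  constructor
  · rintro ⟨_, ⟨⟨j, hj, rfl⟩, hjk⟩, rfl⟩
    refine ⟨Nat.dist k j, ⟨?_, ?_⟩, (hd k j).symm⟩
    · rw [mem_Iic] at hj
      unfold Nat.dist
      omega
    · rw [← hd]
      exact dist_ne_zero.mpr (Ne.symm hjk)
  · rintro ⟨m, ⟨hm, hm0⟩, rfl⟩
    obtain ⟨j, hj, hjm⟩ : ∃ j ≤ n, Nat.dist k j = m := by
      by_cases hmk : m ≤ k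
      · exact ⟨k - m, by omega, by unfold Nat.dist; omega⟩
      · exact ⟨k + m, by omega, by unfold Nat.dist; omega⟩
    refine ⟨x j, ⟨⟨j, hj, rfl⟩, fun hjk => hm0 ?_⟩, by rw [hd, hjm]⟩
    rw [← hjm, ← hd, mem_singleton_iff.mp hjk, dist_self]

theorem NND_image_Iic_subset {M : Type*} [MetricSpace M] {x : ℕ → M} {d : ℕ → ℝ}
    (hd : ∀ j k, dist (x j) (x k) = d (Nat.dist j k)) (n : ℕ) :
    NND (x '' Iic n) ⊆ minNonzero d '' Icc (n - n / 2) n := by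
  rintro _ ⟨_, ⟨k, hk, rfl⟩, rfl⟩
  rw [mem_Iic] at hk
  exact ⟨max k (n - k), ⟨by omega, by omega⟩, (nnd_image_Iic hd hk).symm⟩

theorem mul_neg_of_isRecord {p : ℝ} {α : AddCircle p} {a b : ℕ}
    (ha : IsRecord (fun m : ℕ => ‖m • α‖) a) (hb : IsRecord (fun m : ℕ => ‖m • α‖) b)
    (hab : a < b) (hba : b < 2 * a) {u v : ℝ} (hu : (u : AddCircle p) = a • α)
    (hu' : |u| = ‖a • α‖) (hv : (v : AddCircle p) = b • α) (hv' : |v| = ‖b • α‖) :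
    u * v < 0 := by
  have hb_lt_a : ‖b • α‖ < ‖a • α‖ := hb.2 a hab ha.1
  have hdiff : (b - a) • α = ((v - u : ℝ) : AddCircle p) := by
    rw [AddCircle.coe_sub, hu, hv, sub_nsmul _ hab.le, sub_eq_add_neg]
  have ha_lt_diff : ‖a • α‖ < ‖(b - a) • α‖ := by
    refine ha.2 _ (by omega) fun h0 => hb_lt_a.ne ?_
    rw [norm_eq_zero, hdiff, AddCircle.coe_sub, hu, hv, sub_eq_zero] at h0
    rw [h0]
  refine mul_neg_of_abs_lt_of_abs_lt_abs_sub (by rwa [hu', hv']) ?_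
  calc |u| = ‖a • α‖ := hu'
    _ < ‖(b - a) • α‖ := ha_lt_diff
    _ ≤ |v - u| := hdiff ▸ QuotientAddGroup.norm_mk_le_norm

theorem encard_le_two_of_isRecord {p : ℝ} {α : AddCircle p} {S : Set ℕ}
    (hS : ∀ r ∈ S, IsRecord (fun m : ℕ => ‖m • α‖) r)
    (hS2 : ∀ a ∈ S, ∀ b ∈ S, a < b → b < 2 * a) : S.encard ≤ 2 := by
  choose u hu using fun m : ℕ => AddCircle.exists_coe_eq_and_abs_eq_norm (m • α)
  refine encard_le_two_of_pairwise_mul_neg (f := u) fun a ha b hb hab => ?_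
  rcases hab.lt_or_gt with hab | hba
  · exact mul_neg_of_isRecord (hS a ha) (hS b hb) hab (hS2 a ha b hb hab)
      (hu a).1 (hu a).2 (hu b).1 (hu b).2
  · rw [mul_comm]
    exact mul_neg_of_isRecord (hS b hb) (hS a ha) hba (hS2 b hb a ha hba)
      (hu b).1 (hu b).2 (hu a).1 (hu a).2

theorem norm_le_pi (x : AddCircle (2 * π)) : ‖x‖ ≤ π := by
  simpa [abs_of_pos two_pi_pos] using AddCircle.norm_le_half_period _ two_pi_pos.ne'

noncomputable def chord (s : ℝ) : ℝ := 2 * sin (s / 2)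

theorem norm_exp_ofReal_mul_I_sub_one_eq_chord (φ : ℝ) :
    ‖Complex.exp (φ * Complex.I) - 1‖ = chord ‖(φ : AddCircle (2 * π))‖ := by
  obtain ⟨u, hu, hu'⟩ := AddCircle.exists_coe_eq_and_abs_eq_norm (φ : AddCircle (2 * π))
  have hexp : Complex.exp (φ * Complex.I) = Complex.exp (Complex.I * u) := by
    obtain ⟨k, hk⟩ := (AddCircle.coe_eq_zero_iff (2 * π)).mp
      (by rw [AddCircle.coe_sub, hu, sub_self] : ((φ - u : ℝ) : AddCircle (2 * π)) = 0)
    rw [zsmul_eq_mul] at hk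
    have hφ : (φ : ℂ) = u + k * (2 * π) := by
      exact_mod_cast (by linarith : φ = u + k * (2 * π))
    rw [Complex.exp_eq_exp_iff_exists_int]
    exact ⟨k, by rw [hφ]; ring⟩
  have hu_le : |u / 2| ≤ π := by
    rw [abs_div, abs_two, hu']
    linarith [norm_le_pi (φ : AddCircle (2 * π)), pi_pos]
  rw [hexp, Complex.norm_exp_I_mul_ofReal_sub_one, ← hu', norm_mul, Real.norm_two,
    Real.norm_eq_abs, abs_sin_eq_sin_abs_of_abs_le_pi hu_le, abs_div, abs_two, chord]

theorem strictMonoOn_chord : StrictMonoOn chord (Icc 0 π) :=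
  fun a ha b hb hab => by
    have := strictMonoOn_sin ⟨by linarith [ha.1, pi_pos], by linarith [ha.2]⟩
      ⟨by linarith [hb.1, pi_pos], by linarith [hb.2]⟩ (by linarith : a / 2 < b / 2)
    simp only [chord]
    linarith

theorem dist_exp_mul_I_mul_eq_chord {z : ℂ} (hz : ‖z‖ = 1) (θ : ℝ) (j k : ℕ) :
    dist (Complex.exp (j * θ * Complex.I) * z) (Complex.exp (k * θ * Complex.I) * z) =
      chord ‖Nat.dist j k • (θ : AddCircle (2 * π))‖ := by
  wlog hjk : j ≤ k generalizing j k
  · rw [dist_comm, Nat.dist_comm]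
    exact this k j (le_of_not_ge hjk)
  have hsplit : Complex.exp (k * θ * Complex.I) * z - Complex.exp (j * θ * Complex.I) * z =
      Complex.exp (j * θ * Complex.I) * z *
        (Complex.exp (((k - j : ℕ) * θ : ℝ) * Complex.I) - 1) := by
    have : (k : ℂ) * θ * Complex.I =
        j * θ * Complex.I + (((k - j : ℕ) * θ : ℝ) : ℂ) * Complex.I := by
      push_cast [Nat.cast_sub hjk]; ring
    rw [this, Complex.exp_add]; ring
  have hunit : ‖Complex.exp (j * θ * Complex.I)‖ = 1 := by
    rw [Complex.norm_exp]; simp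
  rw [dist_comm, dist_eq_norm, hsplit, norm_mul, norm_mul, hz, hunit, mul_one, one_mul,
    norm_exp_ofReal_mul_I_sub_one_eq_chord, Nat.dist_eq_sub_of_le hjk, ← nsmul_eq_mul,
    AddCircle.coe_nsmul]

end ThreeGap

open ThreeGap

theorem three_gap_unit_circle_general (z : ℂ) (hz : ‖z‖ = 1) (θ : ℝ) (n : ℕ)
    (X : Set ℂ)
    (hX : X = {w | ∃ k : ℕ, k ≤ n ∧ w = Complex.exp ((k : ℂ) * θ * Complex.I) * z}) :
    (NND X).encard ≤ 3 := by
  set w : ℕ → ℝ := fun m => ‖m • (θ : AddCircle (2 * π))‖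
  set d : ℕ → ℝ := chord ∘ w
  set R := {r | n - n / 2 < r ∧ r ≤ n ∧ IsRecord d r}
  have hX' : X = (fun k : ℕ => Complex.exp (k * θ * Complex.I) * z) '' Iic n := by
    rw [hX]; ext; simp [eq_comm]
  have hw : ∀ m, w m ∈ Icc 0 π := fun m => ⟨norm_nonneg _, norm_le_pi _⟩
  have hR : R.encard ≤ 2 :=
    encard_le_two_of_isRecord
      (fun r hr => hr.2.2.of_comp strictMonoOn_chord hw ⟨le_rfl, pi_pos.le⟩ (by simp [chord]))
      (fun a ha b hb _ => by simp only [R, mem_ofPred_eq] at ha hb; omega)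
  calc (NND X).encard ≤ (insert (minNonzero d (n - n / 2)) (d '' R)).encard := by
        rw [hX']
        exact encard_mono <| (NND_image_Iic_subset (dist_exp_mul_I_mul_eq_chord hz θ) n).trans
          (image_minNonzero_Icc_subset d _ n)
    _ ≤ (d '' R).encard + 1 := encard_insert_le _ _
    _ ≤ R.encard + 1 := by gcongr; exact encard_image_le _ _
    _ ≤ 2 + 1 := by gcongr
    _ = 3 := by norm_num

/-- Three Gap Theorem on the unit circle in `ℂ` with the chordal (Euclidean) metric:
for a point `z` with `|z| = 1`, the rotated points `{e^{ikθ} z : k = 0, …, n}`, if at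
least two are distinct, realize at most three distinct nearest neighbor distances. -/
theorem three_gap_unit_circle (z : ℂ) (hz : ‖z‖ = 1) (θ : ℝ) (n : ℕ)
    (X : Set ℂ)
    (hX : X = {w | ∃ k : ℕ, k ≤ n ∧ w = Complex.exp ((k : ℂ) * θ * Complex.I) * z})
    (h2 : X.Nontrivial) :
    (NND X).encard ≤ 3 :=
  three_gap_unit_circle_general z hz θ n X hX
end
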